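/- If the number of insertions γ and deletions δ satisfy γ + sδ < s(n_t - (k-1)/(h-s+1)), and D = ceil((n_r(h-s+1) + s(k-1) + 1)/(s+1)) with n_r = n_t + γ - δ, then D ≤ (n_t - δ)(h-s+1); consequently the linearized polynomial P(x) = Q(x, f(x), f(αx), ..., f(α^{s-1}x)), which has q-degree less than D and vanishes on (n_t - δ)(h-s+1) F_q-linearly independent points, is identically zero. -/

import Mathlib

/-!
Clearing the denominator `h - s + 1` in the decoding radius gives
`γ(h-s+1) + s(k-1) < s(nt-δ)(h-s+1)`, which is exactly what makes the ceiling `D` at most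
`(nt-δ)(h-s+1)`. For the second part, `x ↦ ∑ cᵢ x^{q^i}` is `F_q`-linear (a combination of powers
of the Frobenius), so it vanishes on the whole span of the `N = (nt-δ)(h-s+1)` points, i.e. on
`q^N` elements. A nonzero `∑ cᵢ X^{q^i}` has degree `< q^D ≤ q^N` and cannot have that many roots.
-/

open Polynomial

section LinearizedPolynomial

variable {L : Type*} [CommRing L]

noncomputable def linearizedPolynomial (q : ℕ) {D : ℕ} (c : Fin D → L) : L[X] :=
  ∑ i, C (c i) * X ^ q ^ (i : ℕ)

theorem eval_linearizedPolynomial (q : ℕ) {D : ℕ} (c : Fin D → L) (x : L) :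
    (linearizedPolynomial q c).eval x = ∑ i, c i * x ^ q ^ (i : ℕ) := by
  simp [linearizedPolynomial, eval_finsetSum]

theorem coeff_linearizedPolynomial {q : ℕ} (hq : 1 < q) {D : ℕ} (c : Fin D → L) (i : Fin D) :
    (linearizedPolynomial q c).coeff (q ^ (i : ℕ)) = c i := by
  rw [linearizedPolynomial, finsetSum_coeff, Finset.sum_eq_single i]
  · simp
  · intro j _ hji
    rw [coeff_C_mul, coeff_X_pow, if_neg, mul_zero]
    exact fun h => hji (Fin.ext (Nat.pow_right_injective hq h.symm))
  · simp

theorem linearizedPolynomial_ne_zero {q : ℕ} (hq : 1 < q) {D : ℕ} {c : Fin D → L} (hc : c ≠ 0) :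
    linearizedPolynomial q c ≠ 0 := by
  obtain ⟨i, hi⟩ := Function.ne_iff.mp hc
  intro h
  exact hi (by rw [← coeff_linearizedPolynomial hq c i, h, coeff_zero]; rfl)

theorem natDegree_linearizedPolynomial_lt {q : ℕ} (hq : 1 < q) {D : ℕ} (c : Fin D → L) :
    (linearizedPolynomial q c).natDegree < q ^ D := by
  refine Nat.lt_of_le_pred (pow_pos (by omega) D) (natDegree_sum_le_of_forall_le _ _ fun i _ => ?_)
  exact (natDegree_C_mul_X_pow_le _ _).trans (Nat.le_pred_of_lt (Nat.pow_lt_pow_right hq i.2))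

variable (K : Type*) [Field K] [Fintype K] [Algebra K L]

noncomputable def linearizedMap {D : ℕ} (c : Fin D → L) : L →ₗ[K] L :=
  ∑ i, LinearMap.mulLeft K (c i) ∘ₗ ((FiniteField.frobeniusAlgHom K L) ^ (i : ℕ)).toLinearMap

theorem linearizedMap_apply {D : ℕ} (c : Fin D → L) (x : L) :
    linearizedMap K c x = ∑ i, c i * x ^ Fintype.card K ^ (i : ℕ) := by
  simp [linearizedMap, FiniteField.coe_frobeniusAlgHom, pow_iterate]

end LinearizedPolynomial

theorem card_pow_le_natDegree_of_span_subset_roots {K L : Type*} [Field K] [Finite K] [Field L]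
    [Algebra K L] {ι : Type*} [Fintype ι] {v : ι → L} (hv : LinearIndependent K v) {P : L[X]}
    (hP : P ≠ 0) (hroot : ∀ x ∈ Submodule.span K (Set.range v), P.eval x = 0) :
    Nat.card K ^ Fintype.card ι ≤ P.natDegree := by
  have := FiniteDimensional.span_of_finite K (Set.finite_range v)
  calc Nat.card K ^ Fintype.card ι = Nat.card (Submodule.span K (Set.range v)) := by
        rw [Module.natCard_eq_pow_finrank (K := K) (V := Submodule.span K (Set.range v)),
          finrank_span_eq_card hv]
    _ = (Submodule.span K (Set.range v) : Set L).ncard := Nat.card_coe_set_eq _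
    _ ≤ (P.rootSet L).ncard := by
        refine Set.ncard_le_ncard (fun x hx => ?_) (P.rootSet_finite L)
        rw [mem_rootSet]
        exact ⟨hP, by simpa using hroot x hx⟩
    _ ≤ P.natDegree := P.ncard_rootSet_le L

theorem linearized_coeff_eq_zero_of_linearIndependent {K L : Type*} [Field K] [Fintype K]
    [Field L] [Algebra K L] {ι : Type*} [Fintype ι] {v : ι → L} (hv : LinearIndependent K v)
    {D : ℕ} (hD : D ≤ Fintype.card ι) (c : Fin D → L)
    (hroot : ∀ j, ∑ i, c i * v j ^ Fintype.card K ^ (i : ℕ) = 0) : c = 0 := by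
  by_contra hc
  have hq : 1 < Fintype.card K := Fintype.one_lt_card
  have hspan : Submodule.span K (Set.range v) ≤ LinearMap.ker (linearizedMap K c) :=
    Submodule.span_le.mpr <| Set.range_subset_iff.mpr fun j => by
      simpa [linearizedMap_apply] using hroot j
  have hroots := card_pow_le_natDegree_of_span_subset_roots hv
    (linearizedPolynomial_ne_zero hq hc) fun x hx => by
      simpa [eval_linearizedPolynomial, linearizedMap_apply] using hspan hx
  have hdeg := natDegree_linearizedPolynomial_lt hq c
  rw [Nat.card_eq_fintype_card] at hroots
  exact absurd (Nat.pow_le_pow_right (Nat.zero_lt_of_lt hq) hD) (by omega)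

theorem add_mul_lt_of_lt_sub_div {γ δ nt k s H : ℕ} (hk : 1 ≤ k) (hH : 0 < H)
    (hrad : (γ : ℚ) + s * δ < s * ((nt : ℚ) - ((k : ℚ) - 1) / H)) :
    γ * H + s * (k - 1) + s * δ * H < s * nt * H := by
  have hHq : (0 : ℚ) < H := by exact_mod_cast hH
  have hcleared : ((γ : ℚ) + s * δ) * H < s * nt * H - s * ((k : ℚ) - 1) := by
    have := mul_lt_mul_of_pos_right hrad hHq
    rwa [mul_sub, sub_mul, mul_assoc (s : ℚ) (((k : ℚ) - 1) / H),
      div_mul_cancel₀ _ hHq.ne'] at this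
  have : ((γ * H + s * (k - 1) + s * δ * H : ℕ) : ℚ) < ((s * nt * H : ℕ) : ℚ) := by
    push_cast [Nat.cast_sub hk]
    linarith
  exact_mod_cast this

theorem add_add_div_succ_le_of_lt {a b s : ℕ} (h : a < s * b) :
    (b + a + 1 + s) / (s + 1) ≤ b := by
  rw [← Nat.lt_succ_iff, Nat.div_lt_iff_lt_mul (Nat.succ_pos s)]
  nlinarith

theorem div_succ_le_of_decoding_radius {nt nr γ δ k s H : ℕ} (hk : 1 ≤ k) (hH : 0 < H)
    (hnr : nr + δ = nt + γ) (hrad : (γ : ℚ) + s * δ < s * ((nt : ℚ) - ((k : ℚ) - 1) / H)) :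
    (nr * H + s * (k - 1) + 1 + s) / (s + 1) ≤ (nt - δ) * H := by
  have hbound := add_mul_lt_of_lt_sub_div hk hH hrad
  have hδ : δ ≤ nt := by
    by_contra! h
    have : s * nt * H ≤ s * δ * H := Nat.mul_le_mul_right H (Nat.mul_le_mul_left s h.le)
    omega
  obtain ⟨n, rfl⟩ := Nat.exists_eq_add_of_le hδ
  obtain rfl : nr = n + γ := by omega
  rw [Nat.add_sub_cancel_left]
  convert add_add_div_succ_le_of_lt (a := γ * H + s * (k - 1)) (b := n * H) (s := s)
    (by nlinarith) using 2
  ring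

theorem decoding_radius_implies_root_general {Fq Fqm : Type*}
    [Field Fq] [Fintype Fq] [Field Fqm] [Algebra Fq Fqm]
    (q : ℕ) (hq : q = Fintype.card Fq)
    (nt h s k D γ δ nr : ℕ) (hsh : s ≤ h) (hk : 1 ≤ k)
    (hnr : nr + δ = nt + γ)
    (hrad : (γ : ℚ) + s * δ < s * ((nt : ℚ) - ((k : ℚ) - 1) / ((h : ℚ) - s + 1)))
    (hD : D = (nr * (h - s + 1) + s * (k - 1) + 1 + s) / (s + 1)) :
    D ≤ (nt - δ) * (h - s + 1) ∧
    ∀ (c : Fin D → Fqm) (a : Fin ((nt - δ) * (h - s + 1)) → Fqm),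
      LinearIndependent Fq a →
      (∀ j, ∑ i : Fin D, c i * a j ^ q ^ (i : ℕ) = 0) →
      ∀ i, c i = 0 := by
  have hH : ((h - s + 1 : ℕ) : ℚ) = (h : ℚ) - s + 1 := by push_cast [Nat.cast_sub hsh]; ring
  have hDN : D ≤ (nt - δ) * (h - s + 1) :=
    hD ▸ div_succ_le_of_decoding_radius hk (Nat.succ_pos _) hnr (hH ▸ hrad)
  refine ⟨hDN, fun c a ha hroot => ?_⟩
  subst hq
  exact congrFun (linearized_coeff_eq_zero_of_linearIndependent ha
    (by rwa [Fintype.card_fin]) c hroot)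

/-- If the insertions `γ` and deletions `δ` satisfy
`γ + sδ < s(nt - (k-1)/(h-s+1))` and `D = ⌈(nr(h-s+1)+s(k-1)+1)/(s+1)⌉` with
`nr = nt + γ - δ`, then `D ≤ (nt - δ)(h-s+1)`; consequently any linearized
polynomial of `q`-degree less than `D` vanishing on `(nt - δ)(h-s+1)`
`F_q`-linearly independent points (such as `P(x) = Q(x, f(x), …, f(α^{s-1}x))`)
is identically zero. -/
theorem decoding_radius_implies_root {Fq Fqm : Type*}
    [Field Fq] [Fintype Fq] [Field Fqm] [Fintype Fqm] [Algebra Fq Fqm]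
    (q : ℕ) (hq : q = Fintype.card Fq)
    (nt h s k D γ δ nr : ℕ) (hs : 1 ≤ s) (hsh : s ≤ h) (hk : 1 ≤ k)
    (hδ : δ ≤ nt) (hnr : nr + δ = nt + γ)
    (hrad : (γ : ℚ) + s * δ < s * ((nt : ℚ) - ((k : ℚ) - 1) / ((h : ℚ) - s + 1)))
    (hD : D = (nr * (h - s + 1) + s * (k - 1) + 1 + s) / (s + 1)) :
    D ≤ (nt - δ) * (h - s + 1) ∧
    ∀ (c : Fin D → Fqm) (a : Fin ((nt - δ) * (h - s + 1)) → Fqm),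
      LinearIndependent Fq a →
      (∀ j, ∑ i : Fin D, c i * a j ^ q ^ (i : ℕ) = 0) →
      ∀ i, c i = 0 :=
  decoding_radius_implies_root_general q hq nt h s k D γ δ nr hsh hk hnr hrad hD
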